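/- arXiv:2303.15010 — 2 statements merged into one kernel-verified Lean document; each statement's English description precedes it below -/
import Mathlib

section
/- For any prime p ≥ 5 and any integer n ≥ 1, ν_p(H(p²n) − H(n)/p²) ≥ 1, where H denotes the harmonic number. -/
/-!
Split `H (p * M)` into the blocks of `p` consecutive terms ending at the multiples of `p`; the
multiples contribute exactly `H M / p`, so `H (p * M) - H M / p` is the sum of the
"Wolstenholme blocks" `∑_{0 < j < p} 1 / (p m + j)`. Pairing `j` with `p - j` shows that twice a
block is `p (2m + 1)` times `∑_j 1 / ((p m + j) (p m + p - j))`, and reducing mod `p` this last sum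
becomes `-∑_{x ∈ 𝔽_p} (x⁻¹)²`, which vanishes for `p ≥ 5`. Hence every block, and so
`H (p * M) - H M / p`, has `p`-adic norm at most `p⁻²`, and the claim follows from
`H (p² n) - H n / p² = (H (p · p n) - H (p n) / p) + (H (p n) - H n / p) / p`.
-/

def H (n : ℕ) : ℚ := ∑ i ∈ Finset.range n, (1 : ℚ) / (i + 1)

open Finset

def harmonicBlock (p m : ℕ) : ℚ := ∑ j ∈ Ico 1 p, ((p * m + j : ℕ) : ℚ)⁻¹

lemma H_add (a b : ℕ) : H (a + b) = H a + ∑ j ∈ Ico 1 (b + 1), ((a + j : ℕ) : ℚ)⁻¹ := by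
  rw [H, sum_range_add, ← H, sum_Ico_eq_sum_range]
  congr 1
  refine sum_congr rfl fun j _ => ?_
  push_cast
  ring

lemma H_mul_sub_div_eq_sum_harmonicBlock (p M : ℕ) :
    H (p * M) - H M / p = ∑ m ∈ range M, harmonicBlock p m := by
  rcases Nat.eq_zero_or_pos p with rfl | hp
  · simp [H, harmonicBlock]
  induction M with
  | zero => simp [H]
  | succ M ih =>
    obtain ⟨q, rfl⟩ : ∃ q, p = q + 1 := ⟨p - 1, by omega⟩
    rw [sum_range_succ, ← ih, mul_add_one, H_add, Nat.add_one, H_add, sum_Ico_succ_top (by omega),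
      harmonicBlock]
    simp only [Nat.succ_eq_add_one, Nat.cast_add, Nat.cast_mul, Nat.cast_one, Nat.reduceAdd,
      Nat.Ico_succ_singleton, sum_singleton]
    field_simp
    ring

lemma two_mul_harmonicBlock (p m : ℕ) :
    2 * harmonicBlock p m = ((p * (2 * m + 1) : ℕ) : ℚ) *
      ∑ j ∈ Ico 1 p, (((p * m + j) * (p * m + (p - j)) : ℕ) : ℚ)⁻¹ := by
  have hreflect : ∑ j ∈ Ico 1 p, ((p * m + (p - j) : ℕ) : ℚ)⁻¹ = harmonicBlock p m := by
    rw [sum_Ico_reflect (fun j => ((p * m + j : ℕ) : ℚ)⁻¹) 1 (by omega),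
      Nat.add_sub_cancel_left, Nat.add_sub_cancel, harmonicBlock]
  rw [two_mul]
  nth_rewrite 2 [← hreflect]
  rw [harmonicBlock, ← sum_add_distrib, mul_sum]
  refine sum_congr rfl fun j hj => ?_
  obtain ⟨hj1, hjp⟩ := mem_Ico.1 hj
  have h1 : ((p * m + j : ℕ) : ℚ) ≠ 0 := by norm_cast; omega
  have h2 : ((p * m + (p - j) : ℕ) : ℚ) ≠ 0 := by norm_cast; omega
  rw [Nat.cast_mul _ (p * m + (p - j))]
  field_simp
  rw [← Nat.cast_add]
  congr 1
  rw [mul_add_one, two_mul, mul_add]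
  omega

lemma not_dvd_mul_add {p m j : ℕ} (hj : j ∈ Ico 1 p) : ¬ p ∣ p * m + j := by
  intro h
  exact Nat.not_dvd_of_pos_of_lt (mem_Ico.1 hj).1 (mem_Ico.1 hj).2
    ((Nat.dvd_add_right (dvd_mul_right p m)).1 h)

lemma ZMod.sum_Ico_one_natCast {n : ℕ} [NeZero n] {M : Type*} [AddCommMonoid M] (f : ZMod n → M)
    (hf : f 0 = 0) : ∑ j ∈ Ico 1 n, f j = ∑ x, f x := by
  have hrange := sum_range_eq_add_Ico (fun j : ℕ => f j) (Nat.pos_of_neZero n)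
  rw [Nat.cast_zero, hf, zero_add] at hrange
  rw [← hrange]
  exact sum_nbij' Nat.cast ZMod.val (fun _ _ => mem_univ _)
    (fun x _ => mem_range.2 (ZMod.val_lt x)) (fun j hj => ZMod.val_cast_of_lt (mem_range.1 hj))
    (fun x _ => ZMod.natCast_zmod_val x) (fun _ _ => rfl)

variable {p : ℕ} [Fact p.Prime]

lemma ZMod.sum_inv_pow_eq_zero {i : ℕ} (hi : i < p - 1) : ∑ x : ZMod p, x⁻¹ ^ i = 0 := by
  rw [Fintype.sum_equiv (Equiv.inv (ZMod p)) (fun x => x⁻¹ ^ i) (· ^ i) (fun _ => rfl)]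
  exact FiniteField.sum_pow_lt_card_sub_one (K := ZMod p) i (by rwa [ZMod.card])

namespace PadicInt

lemma toZMod_inv {z : ℤ_[p]} (hz : ‖z‖ = 1) : toZMod z.inv = (toZMod z)⁻¹ :=
  eq_inv_of_mul_eq_one_right (by rw [← map_mul, mul_inv hz, map_one])

lemma coe_inv {z : ℤ_[p]} (hz : ‖z‖ = 1) : (z.inv : ℚ_[p]) = (z : ℚ_[p])⁻¹ :=
  eq_inv_of_mul_eq_one_right (by rw [← coe_mul, mul_inv hz, coe_one])

lemma norm_le_inv_of_toZMod_eq_zero {z : ℤ_[p]} (hz : toZMod z = 0) : ‖z‖ ≤ (p : ℝ)⁻¹ := by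
  have hlt : ‖z‖ < 1 := by
    rw [← mem_nonunits, ← IsLocalRing.mem_maximalIdeal, ← ker_toZMod]
    exact hz
  simpa using (norm_le_pow_iff_norm_lt_pow_add_one z (-1)).2 (by simpa using hlt)

end PadicInt

/-- The sum is the image of a `p`-adic integer whose reduction mod `p` is `h`'s left-hand side. -/
lemma padicNorm_sum_inv_le_of_sum_inv_eq_zero {ι : Type*} {s : Finset ι} {N : ι → ℕ}
    (hN : ∀ i ∈ s, ¬ p ∣ N i) (h : ∑ i ∈ s, (N i : ZMod p)⁻¹ = 0) :
    padicNorm p (∑ i ∈ s, (N i : ℚ)⁻¹) ≤ (p : ℚ)⁻¹ := by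
  have hunit : ∀ i ∈ s, ‖(N i : ℤ_[p])‖ = 1 := fun i hi =>
    PadicInt.norm_natCast_eq_one_iff.2 ((Fact.out : p.Prime).coprime_iff_not_dvd.2 (hN i hi))
  set x : ℤ_[p] := ∑ i ∈ s, (N i : ℤ_[p]).inv
  have hx : PadicInt.toZMod x = 0 := by
    rw [map_sum, ← h]
    refine sum_congr rfl fun i hi => ?_
    rw [PadicInt.toZMod_inv (hunit i hi), map_natCast]
  have hcoe : (x : ℚ_[p]) = ((∑ i ∈ s, (N i : ℚ)⁻¹ : ℚ) : ℚ_[p]) := by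
    rw [PadicInt.coe_sum]
    push_cast
    refine sum_congr rfl fun i hi => ?_
    rw [PadicInt.coe_inv (hunit i hi), PadicInt.coe_natCast]
  have hnorm := PadicInt.norm_le_inv_of_toZMod_eq_zero hx
  rw [PadicInt.norm_def, hcoe, Padic.eq_padicNorm] at hnorm
  exact (Rat.cast_le (K := ℝ)).1 (by rwa [Rat.cast_inv, Rat.cast_natCast])

lemma padicNorm_sum_inv_mul_reflect_le (hp5 : 5 ≤ p) (m : ℕ) :
    padicNorm p (∑ j ∈ Ico 1 p, (((p * m + j) * (p * m + (p - j)) : ℕ) : ℚ)⁻¹) ≤ (p : ℚ)⁻¹ := by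
  have hreflect : ∀ j ∈ Ico 1 p, p - j ∈ Ico 1 p := fun j hj => by
    simp only [mem_Ico] at hj ⊢
    omega
  refine padicNorm_sum_inv_le_of_sum_inv_eq_zero (fun j hj => ?_) ?_
  · exact (Fact.out : p.Prime).not_dvd_mul (not_dvd_mul_add hj) (not_dvd_mul_add (hreflect j hj))
  · have hmod : ∀ j ∈ Ico 1 p, (((p * m + j) * (p * m + (p - j)) : ℕ) : ZMod p)⁻¹
        = -((j : ZMod p)⁻¹ ^ 2) := fun j hj => by
      push_cast [Nat.cast_sub (mem_Ico.1 hj).2.le, ZMod.natCast_self]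
      rw [zero_mul, zero_add, zero_add, zero_sub, mul_neg, inv_neg, ← sq, inv_pow]
    rw [sum_congr rfl hmod, sum_neg_distrib, ZMod.sum_Ico_one_natCast (fun x => x⁻¹ ^ 2) (by simp),
      ZMod.sum_inv_pow_eq_zero (by omega), neg_zero]

lemma padicNorm_harmonicBlock_le (hp5 : 5 ≤ p) (m : ℕ) :
    padicNorm p (harmonicBlock p m) ≤ (p : ℚ)⁻¹ ^ 2 := by
  have h2 : padicNorm p 2 = 1 := by
    exact_mod_cast (padicNorm.nat_eq_one_iff 2).2 (Nat.not_dvd_of_pos_of_lt two_pos (by omega))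
  have hfactor : padicNorm p ((p * (2 * m + 1) : ℕ) : ℚ) ≤ (p : ℚ)⁻¹ := by
    rw [Nat.cast_mul, padicNorm.mul, padicNorm.padicNorm_p_of_prime]
    exact mul_le_of_le_one_right (by positivity) (padicNorm.of_nat _)
  have hblock := congrArg (padicNorm p) (two_mul_harmonicBlock p m)
  rw [padicNorm.mul, padicNorm.mul, h2, one_mul] at hblock
  rw [hblock, sq]
  exact mul_le_mul hfactor (padicNorm_sum_inv_mul_reflect_le hp5 m) (padicNorm.nonneg _)
    (by positivity)

lemma padicNorm_H_mul_sub_div_le (hp5 : 5 ≤ p) (M : ℕ) :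
    padicNorm p (H (p * M) - H M / p) ≤ (p : ℚ)⁻¹ ^ 2 := by
  rw [H_mul_sub_div_eq_sum_harmonicBlock]
  exact padicNorm.sum_le' (fun m _ => padicNorm_harmonicBlock_le hp5 m) (by positivity)

lemma one_le_padicValRat_of_padicNorm_le {q : ℚ} (hq : q ≠ 0) (h : padicNorm p q ≤ (p : ℚ)⁻¹) :
    1 ≤ padicValRat p q := by
  rw [padicNorm.eq_zpow_of_nonzero hq, ← zpow_neg_one] at h
  have := (zpow_le_zpow_iff_right₀ (by exact_mod_cast (Fact.out : p.Prime).one_lt)).1 h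
  omega

theorem stmt_4_general (p : ℕ) (hp : p.Prime) (hp5 : 5 ≤ p) (n : ℕ) :
    H (p ^ 2 * n) - H n / (p ^ 2 : ℚ) = 0 ∨
      1 ≤ padicValRat p (H (p ^ 2 * n) - H n / (p ^ 2 : ℚ)) := by
  have := Fact.mk hp
  have hp0 : (p : ℚ) ≠ 0 := by exact_mod_cast hp.ne_zero
  rw [or_iff_not_imp_left]
  intro hD
  refine one_le_padicValRat_of_padicNorm_le hD ?_
  have hsplit : H (p ^ 2 * n) - H n / (p ^ 2 : ℚ)
      = (H (p * (p * n)) - H (p * n) / p) + (H (p * n) - H n / p) / p := by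
    rw [sq, mul_assoc]
    field_simp
    ring
  have hp_inv_le : (p : ℚ)⁻¹ ^ 2 ≤ (p : ℚ)⁻¹ :=
    pow_le_of_le_one (by positivity) (inv_le_one_of_one_le₀ (by exact_mod_cast hp.one_le))
      two_ne_zero
  rw [hsplit]
  refine padicNorm.nonarchimedean.trans (max_le ?_ ?_)
  · exact (padicNorm_H_mul_sub_div_le hp5 _).trans hp_inv_le
  · rw [padicNorm.div, padicNorm.padicNorm_p_of_prime, div_le_iff₀ (by positivity), ← sq]
    exact padicNorm_H_mul_sub_div_le hp5 n

theorem stmt_4 (p : ℕ) (hp : p.Prime) (hp5 : 5 ≤ p) (n : ℕ) (hn : 1 ≤ n) :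
    H (p ^ 2 * n) - H n / (p ^ 2 : ℚ) = 0 ∨
      1 ≤ padicValRat p (H (p ^ 2 * n) - H n / (p ^ 2 : ℚ)) :=
  stmt_4_general p hp hp5 n
end

section
/- Let p ≥ 5 be a prime and n ≥ 1 an integer with ν_p(H(pn)) ≥ 1. Then for each k with 1 ≤ k ≤ p−1, ν_p(H(pn+k)) = 0 if and only if ν_p(H(k)) = 0. -/
namespace padicNorm

variable {p : ℕ} [Fact p.Prime]

theorem eq_one_iff_padicValRat_eq_zero {q : ℚ} (hq : q ≠ 0) :
    padicNorm p q = 1 ↔ padicValRat p q = 0 := by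
  have hp : (1 : ℚ) < p := by exact_mod_cast (Fact.out : p.Prime).one_lt
  rw [padicNorm.eq_zpow_of_nonzero hq, zpow_eq_one_iff_right₀ (zero_le_one.trans hp.le) hp.ne',
    neg_eq_zero]

theorem lt_one_of_one_le_padicValRat {q : ℚ} (hq : 1 ≤ padicValRat p q) : padicNorm p q < 1 := by
  rcases eq_or_ne q 0 with rfl | hq0
  · simp
  rw [padicNorm.eq_zpow_of_nonzero hq0]
  exact zpow_lt_one_of_neg₀ (by exact_mod_cast (Fact.out : p.Prime).one_lt) (by omega)

theorem eq_of_sub_lt {q r : ℚ} (h : padicNorm p (q - r) < padicNorm p r) :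
    padicNorm p q = padicNorm p r := by
  simpa [max_eq_right h.le] using add_eq_max_of_ne h.ne

theorem eq_one_iff_of_sub_lt_one {q r : ℚ} (h : padicNorm p (q - r) < 1) :
    padicNorm p q = 1 ↔ padicNorm p r = 1 := by
  constructor
  · intro hq
    rw [← hq]
    refine eq_of_sub_lt ?_
    rwa [← padicNorm.neg, neg_sub, hq]
  · intro hr
    rw [← hr]
    exact eq_of_sub_lt (hr ▸ h)

theorem natCast_add_inv_sub_inv_lt_one {m b : ℕ} (hm : p ∣ m) (hb : ¬ p ∣ b) :
    padicNorm p (((m + b : ℕ) : ℚ)⁻¹ - (b : ℚ)⁻¹) < 1 := by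
  have hmb : ¬ p ∣ m + b := fun h => hb ((Nat.dvd_add_right hm).mp h)
  have hb0 : (b : ℚ) ≠ 0 := Nat.cast_ne_zero.mpr (by rintro rfl; exact hb (dvd_zero p))
  have hmb0 : ((m + b : ℕ) : ℚ) ≠ 0 :=
    Nat.cast_ne_zero.mpr (fun h => hmb (h ▸ dvd_zero p))
  have hnum : (b : ℚ) - ((m + b : ℕ) : ℚ) = -m := by push_cast; ring
  rw [inv_sub_inv hmb0 hb0, padicNorm.div, padicNorm.mul, (nat_eq_one_iff _).2 hmb,
    (nat_eq_one_iff _).2 hb, mul_one, div_one, hnum, padicNorm.neg]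
  exact (nat_lt_one_iff m).2 hm

end padicNorm

theorem H_eq_harmonic : H = harmonic := by
  funext n
  simp [H, harmonic]

theorem harmonic_add (m k : ℕ) :
    harmonic (m + k) = harmonic m + ∑ j ∈ Finset.range k, ((m + (j + 1) : ℕ) : ℚ)⁻¹ := by
  simp only [harmonic, Finset.sum_range_add, add_assoc]

theorem padicNorm_harmonic_add_sub_lt_one {p : ℕ} [Fact p.Prime] {m k : ℕ} (hpm : p ∣ m)
    (hm : padicNorm p (harmonic m) < 1) (hk : k < p) :
    padicNorm p (harmonic (m + k) - harmonic k) < 1 := by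
  have hterm : ∀ j ∈ Finset.range k,
      padicNorm p (((m + (j + 1) : ℕ) : ℚ)⁻¹ - ((j + 1 : ℕ) : ℚ)⁻¹) < 1 := by
    intro j hj
    refine padicNorm.natCast_add_inv_sub_inv_lt_one hpm (Nat.not_dvd_of_pos_of_lt j.succ_pos ?_)
    have := Finset.mem_range.mp hj
    omega
  have hsplit : harmonic (m + k) - harmonic k = harmonic m +
      ∑ j ∈ Finset.range k, (((m + (j + 1) : ℕ) : ℚ)⁻¹ - ((j + 1 : ℕ) : ℚ)⁻¹) := by
    rw [harmonic_add, Finset.sum_sub_distrib, add_sub_assoc]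
    rfl
  rw [hsplit]
  exact padicNorm.nonarchimedean.trans_lt (max_lt hm (padicNorm.sum_lt' hterm one_pos))

theorem stmt_6_general (p : ℕ) (hp : p.Prime) (n : ℕ)
    (h1 : 1 ≤ padicValRat p (H (p * n)))
    (k : ℕ) (hk1 : 1 ≤ k) (hk2 : k ≤ p - 1) :
    padicValRat p (H (p * n + k)) = 0 ↔ padicValRat p (H k) = 0 := by
  have := Fact.mk hp
  rw [H_eq_harmonic] at h1 ⊢
  have hcong := padicNorm_harmonic_add_sub_lt_one (k := k) (dvd_mul_right p n)
    (padicNorm.lt_one_of_one_le_padicValRat h1) (by have := hp.pos; omega)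
  rw [← padicNorm.eq_one_iff_padicValRat_eq_zero (harmonic_pos (by omega)).ne',
    ← padicNorm.eq_one_iff_padicValRat_eq_zero (harmonic_pos (by omega)).ne']
  exact padicNorm.eq_one_iff_of_sub_lt_one hcong

theorem stmt_6 (p : ℕ) (hp : p.Prime) (hp5 : 5 ≤ p) (n : ℕ) (hn : 1 ≤ n)
    (h1 : 1 ≤ padicValRat p (H (p * n)))
    (k : ℕ) (hk1 : 1 ≤ k) (hk2 : k ≤ p - 1) :
    padicValRat p (H (p * n + k)) = 0 ↔ padicValRat p (H k) = 0 :=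
  stmt_6_general p hp n h1 k hk1 hk2
end
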